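/- Let V : ℝⁿ → ℝ be concave, let f0,...,fm be nonnegative densities, and for a probability vector p = (p0,...,pm) define the Bayes operator (TV)(p) = ∫ V(p'(z)) f_{Z,p}(z) dz, where f_{Z,p}(z) = Σ_i p_i f_i(z) and p'_i(z) = p_i f_i(z)/f_{Z,p}(z). Then TV is concave on the probability simplex. -/

import Mathlib

open MeasureTheory

/-!
For each observation `z`, the integrand is the perspective `t * V (t⁻¹ • x)` of `V`, evaluated at
`x = (p i * f i z)ᵢ` and `t = ∑ j, p j * f j z`, both linear in the prior `p`. The perspective of a
concave function is positively homogeneous and superadditive, hence concave, so the integrand is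
concave in `p` for every `z`; integrating preserves concavity. Integrability holds because the
posterior lies in the simplex, on which the continuous function `V` is bounded, so the integrand
is dominated by a multiple of the integrable evidence `∑ j, p j * f j z`.
-/

section Perspective

variable {E : Type*} [AddCommGroup E] [Module ℝ E]

noncomputable def perspective (V : E → ℝ) (x : E) (t : ℝ) : ℝ := t * V (t⁻¹ • x)

lemma perspective_smul (V : E → ℝ) (x : E) (t : ℝ) {a : ℝ} (ha : 0 ≤ a) :
    perspective V (a • x) (a * t) = a * perspective V x t := by
  unfold perspective
  rcases ha.eq_or_lt with rfl | ha
  · simp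
  · rw [mul_inv, mul_comm a⁻¹, mul_smul, inv_smul_smul₀ ha.ne', mul_assoc]

/-- At `t = 0` the perspective takes the junk value `0`, which is only the right value at
`x = 0`; hence the side conditions. -/
lemma ConcaveOn.perspective_add_le {V : E → ℝ} (hV : ConcaveOn ℝ Set.univ V) {x y : E}
    {s t : ℝ} (hs : 0 ≤ s) (ht : 0 ≤ t) (hxs : s = 0 → x = 0) (hyt : t = 0 → y = 0) :
    perspective V x s + perspective V y t ≤ perspective V (x + y) (s + t) := by
  unfold perspective
  rcases hs.eq_or_lt with rfl | hs
  · simp [hxs rfl]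
  rcases ht.eq_or_lt with rfl | ht
  · simp [hyt rfl]
  have hst : 0 < s + t := add_pos hs ht
  have hmix : (s + t)⁻¹ • (x + y)
      = (s / (s + t)) • (s⁻¹ • x) + (t / (s + t)) • (t⁻¹ • y) := by
    simp only [smul_smul, smul_add]
    congr 2 <;> field_simp
  have hV' := hV.2 (Set.mem_univ (s⁻¹ • x)) (Set.mem_univ (t⁻¹ • y))
    (div_nonneg hs.le hst.le) (div_nonneg ht.le hst.le) (by field_simp)
  rw [← hmix, smul_eq_mul, smul_eq_mul] at hV'
  calc s * V (s⁻¹ • x) + t * V (t⁻¹ • y)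
      = (s + t) * (s / (s + t) * V (s⁻¹ • x) + t / (s + t) * V (t⁻¹ • y)) := by
        field_simp
    _ ≤ (s + t) * V ((s + t)⁻¹ • (x + y)) := mul_le_mul_of_nonneg_left hV' hst.le

end Perspective

section Bayes

variable {ι : Type*} [Fintype ι]

lemma mul_eq_zero_of_sum_mul_eq_zero {p c : ι → ℝ} (hp : 0 ≤ p) (hc : 0 ≤ c)
    (h : ∑ j, p j * c j = 0) : p * c = 0 := by
  funext i
  exact (Finset.sum_eq_zero_iff_of_nonneg fun j _ => mul_nonneg (hp j) (hc j)).1 h i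
    (Finset.mem_univ i)

lemma posterior_mem_stdSimplex {p c : ι → ℝ} (hp : 0 ≤ p) (hc : 0 ≤ c)
    (h : 0 < ∑ j, p j * c j) :
    (fun i => p i * c i / ∑ j, p j * c j) ∈ stdSimplex ℝ ι :=
  ⟨fun i => div_nonneg (mul_nonneg (hp i) (hc i)) h.le,
    by rw [← Finset.sum_div, div_self h.ne']⟩

lemma posterior_mul_evidence_eq_perspective (V : (ι → ℝ) → ℝ) (p c : ι → ℝ) :
    V (fun i => p i * c i / ∑ j, p j * c j) * ∑ j, p j * c j
      = perspective V (p * c) (∑ j, p j * c j) := by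
  unfold perspective
  rw [mul_comm]
  congr 2
  funext i
  simp only [Pi.smul_apply, Pi.mul_apply, smul_eq_mul, div_eq_inv_mul]

theorem ConcaveOn.posterior_mul_evidence {V : (ι → ℝ) → ℝ} (hV : ConcaveOn ℝ Set.univ V)
    {c : ι → ℝ} (hc : 0 ≤ c) :
    ConcaveOn ℝ (Set.Ici (0 : ι → ℝ))
      (fun p => V (fun i => p i * c i / ∑ j, p j * c j) * ∑ j, p j * c j) := by
  simp only [posterior_mul_evidence_eq_perspective]
  refine ⟨convex_Ici 0, fun p (hp : 0 ≤ p) q (hq : 0 ≤ q) a b ha hb _ => ?_⟩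
  have hscaled : ∀ {r : ι → ℝ} {d : ℝ}, 0 ≤ r →
      d * ∑ j, r j * c j = 0 → d • (r * c) = 0 := fun hr h => by
    rcases mul_eq_zero.1 h with h | h
    · simp [h]
    · simp [mul_eq_zero_of_sum_mul_eq_zero hr hc h]
  have hsum : ∀ r : ι → ℝ, 0 ≤ r → 0 ≤ ∑ j, r j * c j := fun r hr =>
    Finset.sum_nonneg fun j _ => mul_nonneg (hr j) (hc j)
  calc a • perspective V (p * c) (∑ j, p j * c j) + b • perspective V (q * c) (∑ j, q j * c j)
      = perspective V (a • (p * c)) (a * ∑ j, p j * c j)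
          + perspective V (b • (q * c)) (b * ∑ j, q j * c j) := by
        rw [perspective_smul _ _ _ ha, perspective_smul _ _ _ hb, smul_eq_mul, smul_eq_mul]
    _ ≤ perspective V (a • (p * c) + b • (q * c))
          (a * ∑ j, p j * c j + b * ∑ j, q j * c j) :=
        hV.perspective_add_le (mul_nonneg ha (hsum p hp)) (mul_nonneg hb (hsum q hq))
          (hscaled hp) (hscaled hq)
    _ = perspective V ((a • p + b • q) * c) (∑ j, (a • p + b • q) j * c j) := by
        congr 1
        · rw [add_mul, smul_mul_assoc, smul_mul_assoc]
        · simp only [Finset.mul_sum, Pi.add_apply, Pi.smul_apply, smul_eq_mul, add_mul,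
            Finset.sum_add_distrib, mul_assoc]

variable {α : Type*} [MeasurableSpace α] {μ : Measure α}

lemma integrable_posterior_mul_evidence {f : ι → α → ℝ} (hf : ∀ i x, 0 ≤ f i x)
    (hfi : ∀ i, Integrable (f i) μ) {V : (ι → ℝ) → ℝ} (hVc : Continuous V)
    {p : ι → ℝ} (hp : 0 ≤ p) :
    Integrable (fun z => V (fun i => p i * f i z / ∑ j, p j * f j z) * ∑ j, p j * f j z) μ := by
  obtain ⟨C, hC⟩ := (isCompact_stdSimplex ℝ ι).exists_bound_of_continuousOn hVc.continuousOn
  have hevidence : Integrable (fun z => ∑ j, p j * f j z) μ :=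
    integrable_finsetSum _ fun j _ => (hfi j).const_mul (p j)
  have hmeas : AEStronglyMeasurable
      (fun z => V (fun i => p i * f i z / ∑ j, p j * f j z) * ∑ j, p j * f j z) μ := by
    refine (hVc.measurable.comp_aemeasurable ?_).mul hevidence.aemeasurable
      |>.aestronglyMeasurable
    exact aemeasurable_pi_lambda _ fun i =>
      ((hfi i).aemeasurable.const_mul (p i)).div hevidence.aemeasurable
  refine (hevidence.const_mul (max C 0)).mono' hmeas (Filter.Eventually.of_forall fun z => ?_)
  have hs0 : 0 ≤ ∑ j, p j * f j z := Finset.sum_nonneg fun j _ => mul_nonneg (hp j) (hf j z)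
  rcases hs0.eq_or_lt with hz | hz
  · simp [← hz]
  · rw [Real.norm_eq_abs, abs_mul, abs_of_nonneg hs0]
    exact mul_le_mul_of_nonneg_right
      ((hC _ (posterior_mem_stdSimplex hp (fun i => hf i z) hz)).trans (le_max_left _ _)) hs0

end Bayes

lemma ConcaveOn.integral {E α : Type*} [AddCommMonoid E] [Module ℝ E] [MeasurableSpace α]
    {μ : Measure α} {s : Set E} (hs : Convex ℝ s) {F : E → α → ℝ}
    (hF : ∀ z, ConcaveOn ℝ s (fun p => F p z)) (hFi : ∀ p ∈ s, Integrable (F p) μ) :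
    ConcaveOn ℝ s (fun p => ∫ z, F p z ∂μ) := by
  refine ⟨hs, fun p hp q hq a b ha hb hab => ?_⟩
  simp only [smul_eq_mul]
  rw [← integral_const_mul, ← integral_const_mul,
    ← integral_add ((hFi p hp).const_mul a) ((hFi q hq).const_mul b)]
  exact integral_mono (((hFi p hp).const_mul a).add ((hFi q hq).const_mul b))
    (hFi _ (hs hp hq ha hb hab)) fun z => (hF z).2 hp hq ha hb hab

theorem bayes_operator_preserves_concavity_general (m : ℕ)
    (f : Fin (m + 1) → ℝ → ℝ)
    (hf : ∀ i x, 0 ≤ f i x)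
    (hfi : ∀ i, Integrable (f i))
    (V : (Fin (m + 1) → ℝ) → ℝ) (hV : ConcaveOn ℝ Set.univ V) :
    ConcaveOn ℝ
      {p : Fin (m + 1) → ℝ | (∀ i, 0 ≤ p i) ∧ ∑ i, p i = 1}
      (fun p => ∫ z : ℝ,
        V (fun i => p i * f i z / ∑ j, p j * f j z) * ∑ j, p j * f j z) := by
  have hVc : Continuous V := continuousOn_univ.1 (hV.continuousOn isOpen_univ)
  have hsimplex_nonneg : stdSimplex ℝ (Fin (m + 1)) ⊆ Set.Ici 0 := fun p hp => hp.1
  exact ConcaveOn.integral (convex_stdSimplex ℝ _)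
    (fun z => (hV.posterior_mul_evidence fun i => hf i z).subset hsimplex_nonneg
      (convex_stdSimplex ℝ _))
    (fun p hp => integrable_posterior_mul_evidence hf hfi hVc hp.1)

/-- The Bayes operator preserves concavity: for a concave
`V : ℝ^{m+1} → ℝ` and nonnegative densities `f i`, the map
`p ↦ ∫ V(p'(z)) f_{Z,p}(z) dz`, where `f_{Z,p}(z) = ∑ i, p i * f i z` and
`p'_i(z) = p i * f i z / f_{Z,p}(z)`, is concave on the probability simplex. -/
theorem bayes_operator_preserves_concavity (m : ℕ)
    (f : Fin (m + 1) → ℝ → ℝ)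
    (hfm : ∀ i, Measurable (f i)) (hf : ∀ i x, 0 ≤ f i x)
    (hfi : ∀ i, Integrable (f i)) (hfint : ∀ i, (∫ z, f i z) = 1)
    (V : (Fin (m + 1) → ℝ) → ℝ) (hV : ConcaveOn ℝ Set.univ V) :
    ConcaveOn ℝ
      {p : Fin (m + 1) → ℝ | (∀ i, 0 ≤ p i) ∧ ∑ i, p i = 1}
      (fun p => ∫ z : ℝ,
        V (fun i => p i * f i z / ∑ j, p j * f j z) * ∑ j, p j * f j z) :=
  bayes_operator_preserves_concavity_general m f hf hfi V hV
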